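/- arXiv:1206.4485 — 2 statements merged into one kernel-verified Lean document; each statement's English description precedes it below -/
import Mathlib

section
/- Define the P-positions of Wythoff Nim recursively: (x,y) ∈ ℕ₀² is a P-position iff no move from (x,y) leads to a P-position, where the moves from (x,y) are all (x−t,y), (x,y−t), and (x−t,y−t) for t ≥ 1 with nonnegative resulting coordinates. Then (x,y) is a P-position if and only if {x,y} = {⌊φn⌋, ⌊φ²n⌋} for some n ∈ ℕ₀, where φ = (1+√5)/2. -/
/-!
Positions of a game without infinite plays are classified by the recursion defining P, so it is
enough that the pairs `(⌊φn⌋, ⌊φ²n⌋)` and their mirror images satisfy it. Since `φ` is irrational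
and `1/φ + 1/φ² = 1`, Rayleigh's theorem makes the Beatty sequences `⌊φn⌋` and `⌊φ²n⌋ = ⌊φn⌋ + n`
partition the positive integers. Hence every number lies in exactly one pair and the pair with
difference `n` is unique, so no move joins two pairs. Conversely, from `(x, y)` with `x ≤ y` not a
pair, `x` belongs to some pair: lower `y` to the partner of `x`, or, if `y` is too small for that,
move diagonally to the pair whose difference is `y - x`.
-/

noncomputable def phi : ℝ := (1 + Real.sqrt 5) / 2

def WythoffMove (p q : ℕ × ℕ) : Prop :=
  ∃ t : ℕ, 1 ≤ t ∧
    ((t ≤ p.1 ∧ q = (p.1 - t, p.2)) ∨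
     (t ≤ p.2 ∧ q = (p.1, p.2 - t)) ∨
     (t ≤ p.1 ∧ t ≤ p.2 ∧ q = (p.1 - t, p.2 - t)))

theorem WellFounded.kernel_unique {α : Type*} {move : α → α → Prop}
    (hwf : WellFounded (flip move)) {P S : α → Prop}
    (hP : ∀ p, P p ↔ ∀ q, move p q → ¬ P q) (hS : ∀ p, S p ↔ ∀ q, move p q → ¬ S q)
    (p : α) : P p ↔ S p := by
  induction p using hwf.induction with
  | _ p ih =>
    rw [hP, hS]
    exact forall_congr' fun q => forall_congr' fun hpq => not_congr (ih q hpq)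

theorem xor_exists_pos_natFloor_mul_eq {r s : ℝ} (hrs : r.HolderConjugate s) (hr : Irrational r)
    {m : ℕ} (hm : 0 < m) :
    Xor (∃ k : ℕ, 0 < k ∧ ⌊r * k⌋₊ = m) (∃ k : ℕ, 0 < k ∧ ⌊s * k⌋₊ = m) := by
  have mem_iff : ∀ a : ℝ, 0 ≤ a →
      ((m : ℤ) ∈ {beattySeq a k | k > 0} ↔ ∃ k : ℕ, 0 < k ∧ ⌊a * k⌋₊ = m) := by
    intro a ha
    constructor
    · rintro ⟨k, hk, hkm⟩
      lift k to ℕ using hk.le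
      refine ⟨k, by exact_mod_cast hk, ?_⟩
      rw [beattySeq, ← Int.natCast_floor_eq_floor (by positivity), Int.cast_natCast,
        mul_comm] at hkm
      exact_mod_cast hkm
    · rintro ⟨k, hk, hkm⟩
      refine ⟨k, by exact_mod_cast hk, ?_⟩
      rw [beattySeq, ← Int.natCast_floor_eq_floor (by positivity), Int.cast_natCast,
        mul_comm, hkm]
  have hmem : (m : ℤ) ∈ {n : ℤ | 0 < n} := Int.natCast_pos.2 hm
  rw [← hr.beattySeq_symmDiff_beattySeq_pos hrs, Set.mem_symmDiff, mem_iff r hrs.nonneg,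
    mem_iff s hrs.symm.nonneg] at hmem
  exact hmem

open Real in
lemma Real.goldenRatio_holderConjugate : goldenRatio.HolderConjugate (goldenRatio ^ 2) := by
  rw [holderConjugate_iff_eq_conjExponent one_lt_goldenRatio, eq_div_iff
    (sub_ne_zero.2 one_lt_goldenRatio.ne'), goldenRatio_sq]
  linear_combination goldenRatio_sq

namespace Wythoff

open Real

lemma phi_eq_goldenRatio : phi = goldenRatio := rfl

noncomputable def lower (n : ℕ) : ℕ := ⌊phi * n⌋₊

noncomputable def upper (n : ℕ) : ℕ := ⌊phi ^ 2 * n⌋₊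

lemma upper_eq_lower_add (n : ℕ) : upper n = lower n + n := by
  rw [upper, lower, phi_eq_goldenRatio, goldenRatio_sq, add_mul, one_mul,
    Nat.floor_add_natCast (by positivity)]

lemma lower_zero : lower 0 = 0 := by simp [lower]

lemma lower_strictMono : StrictMono lower := by
  refine strictMono_nat_of_lt_succ fun n => ?_
  calc lower n < ⌊phi * n + 1⌋₊ := by
        rw [Nat.floor_add_one (by rw [phi_eq_goldenRatio]; positivity)]
        exact Nat.lt_succ_self _
    _ ≤ lower (n + 1) := by
        rw [lower, Nat.cast_succ, mul_add_one]
        exact Nat.floor_le_floor (by rw [phi_eq_goldenRatio]; linarith [one_lt_goldenRatio])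

lemma upper_strictMono : StrictMono upper := by
  intro m n hmn
  simp only [upper_eq_lower_add]
  have := lower_strictMono hmn
  omega

lemma lower_eq_upper_iff {n m : ℕ} : lower n = upper m ↔ n = 0 ∧ m = 0 := by
  refine ⟨fun h => ?_, fun ⟨hn, hm⟩ => by simp [hn, hm, upper_eq_lower_add, lower_zero]⟩
  have hn_le : n ≤ lower n := lower_strictMono.id_le n
  have hm_le : m ≤ upper m := by rw [upper_eq_lower_add]; omega
  rcases m.eq_zero_or_pos with rfl | hm
  · simp only [upper_eq_lower_add, lower_zero] at h
    omega
  rcases n.eq_zero_or_pos with rfl | hn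
  · rw [lower_zero] at h
    omega
  have hxor := xor_exists_pos_natFloor_mul_eq goldenRatio_holderConjugate goldenRatio_irrational
    (hn.trans_le hn_le)
  exact ((xor_iff_or_and_not_and _ _).1 hxor).2 ⟨⟨n, hn, rfl⟩, ⟨m, hm, h.symm⟩⟩ |>.elim

lemma exists_lower_eq_or_upper_eq (m : ℕ) : (∃ n, lower n = m) ∨ ∃ n, upper n = m := by
  rcases m.eq_zero_or_pos with rfl | hm
  · exact .inl ⟨0, lower_zero⟩
  · rcases xor_exists_pos_natFloor_mul_eq goldenRatio_holderConjugate goldenRatio_irrational hm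
      with ⟨⟨n, -, hn⟩, -⟩ | ⟨⟨n, -, hn⟩, -⟩
    exacts [.inl ⟨n, hn⟩, .inr ⟨n, hn⟩]

def IsPair (x y : ℕ) : Prop := ∃ n, (x = lower n ∧ y = upper n) ∨ (x = upper n ∧ y = lower n)

lemma IsPair.symm {x y : ℕ} (h : IsPair x y) : IsPair y x := by
  obtain ⟨n, h | h⟩ := h
  exacts [⟨n, .inr h.symm⟩, ⟨n, .inl h.symm⟩]

lemma IsPair.right_unique {x y y' : ℕ} (h : IsPair x y) (h' : IsPair x y') : y = y' := by
  obtain ⟨n, ⟨rfl, rfl⟩ | ⟨rfl, rfl⟩⟩ := h <;> obtain ⟨m, ⟨hx, rfl⟩ | ⟨hx, rfl⟩⟩ := h'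
  · rw [lower_strictMono.injective hx]
  · obtain ⟨rfl, rfl⟩ := lower_eq_upper_iff.1 hx
    exact hx.symm
  · obtain ⟨rfl, rfl⟩ := lower_eq_upper_iff.1 hx.symm
    exact hx.symm
  · rw [upper_strictMono.injective hx]

lemma IsPair.left_unique {x x' y : ℕ} (h : IsPair x y) (h' : IsPair x' y) : x = x' :=
  h.symm.right_unique h'.symm

lemma IsPair.eq_zero_of_isPair_add_add {x y t : ℕ} (h : IsPair x y)
    (h' : IsPair (x + t) (y + t)) : t = 0 := by
  obtain ⟨n, hn⟩ := h'
  obtain ⟨m, hm⟩ := h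
  simp only [upper_eq_lower_add] at hn hm
  obtain rfl : n = m := by omega
  omega

lemma wythoffMove_iff {x y u v : ℕ} : WythoffMove (x, y) (u, v) ↔
    ∃ t, 0 < t ∧ ((x = u + t ∧ y = v) ∨ (x = u ∧ y = v + t) ∨ (x = u + t ∧ y = v + t)) := by
  simp only [WythoffMove, Prod.mk.injEq]
  constructor <;> rintro ⟨t, ht, h⟩ <;> exact ⟨t, ht, by omega⟩

lemma wythoffMove_swap {x y u v : ℕ} (h : WythoffMove (x, y) (u, v)) :
    WythoffMove (y, x) (v, u) := by
  obtain ⟨t, ht, h⟩ := wythoffMove_iff.1 h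
  exact wythoffMove_iff.2 ⟨t, ht, by omega⟩

lemma wellFounded_flip_wythoffMove : WellFounded (flip WythoffMove) := by
  refine Subrelation.wf (fun {q p} h => ?_) (measure fun p : ℕ × ℕ => p.1 + p.2).wf
  obtain ⟨t, ht, h⟩ := wythoffMove_iff.1 h
  change q.1 + q.2 < p.1 + p.2
  omega

lemma IsPair.not_isPair_of_wythoffMove {x y u v : ℕ} (h : IsPair x y)
    (hmove : WythoffMove (x, y) (u, v)) : ¬ IsPair u v := by
  intro h'
  obtain ⟨t, ht, ⟨rfl, rfl⟩ | ⟨rfl, rfl⟩ | ⟨rfl, rfl⟩⟩ := wythoffMove_iff.1 hmove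
  · have := h.left_unique h'; omega
  · have := h.right_unique h'; omega
  · have := h'.eq_zero_of_isPair_add_add h; omega

lemma exists_wythoffMove_isPair_of_le {x y : ℕ} (hxy : x ≤ y) (h : ¬ IsPair x y) :
    ∃ u v, WythoffMove (x, y) (u, v) ∧ IsPair u v := by
  have hupper := upper_eq_lower_add
  obtain ⟨n, rfl⟩ | ⟨n, rfl⟩ := exists_lower_eq_or_upper_eq x
  · rcases lt_trichotomy y (upper n) with hy | rfl | hy
    · -- the pair with difference `y - x` lies on the diagonal through `(x, y)`, below it
      have hd : y - lower n < n := by have := hupper n; omega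
      have hlower := lower_strictMono hd
      refine ⟨lower (y - lower n), upper (y - lower n), wythoffMove_iff.2 ?_,
        ⟨_, .inl ⟨rfl, rfl⟩⟩⟩
      refine ⟨lower n - lower (y - lower n), by omega, .inr (.inr ⟨by omega, ?_⟩)⟩
      have := hupper (y - lower n)
      omega
    · exact (h ⟨n, .inl ⟨rfl, rfl⟩⟩).elim
    · exact ⟨lower n, upper n, wythoffMove_iff.2 ⟨y - upper n, by omega, by omega⟩,
        ⟨n, .inl ⟨rfl, rfl⟩⟩⟩
  · have hy : lower n ≠ y := fun hy => h ⟨n, .inr ⟨rfl, hy.symm⟩⟩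
    have := hupper n
    exact ⟨upper n, lower n, wythoffMove_iff.2 ⟨y - lower n, by omega, by omega⟩,
      ⟨n, .inr ⟨rfl, rfl⟩⟩⟩

lemma exists_wythoffMove_isPair {x y : ℕ} (h : ¬ IsPair x y) :
    ∃ u v, WythoffMove (x, y) (u, v) ∧ IsPair u v := by
  rcases le_total x y with hxy | hyx
  · exact exists_wythoffMove_isPair_of_le hxy h
  · obtain ⟨u, v, hmove, huv⟩ := exists_wythoffMove_isPair_of_le hyx (fun h' => h h'.symm)
    exact ⟨v, u, wythoffMove_swap hmove, huv.symm⟩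

lemma isPair_iff_forall_wythoffMove (p : ℕ × ℕ) :
    IsPair p.1 p.2 ↔ ∀ q, WythoffMove p q → ¬ IsPair q.1 q.2 := by
  refine ⟨fun h q hmove => h.not_isPair_of_wythoffMove hmove, fun h => ?_⟩
  by_contra hp
  obtain ⟨u, v, hmove, huv⟩ := exists_wythoffMove_isPair hp
  exact h (u, v) hmove huv

end Wythoff

open Wythoff in
theorem wythoff_P_positions (P : ℕ × ℕ → Prop)
    (hP : ∀ p, P p ↔ ∀ q, WythoffMove p q → ¬ P q) :
    ∀ x y : ℕ, P (x, y) ↔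
      ∃ n : ℕ, (x = ⌊phi * n⌋₊ ∧ y = ⌊phi ^ 2 * n⌋₊) ∨
               (x = ⌊phi ^ 2 * n⌋₊ ∧ y = ⌊phi * n⌋₊) := fun x y =>
  wellFounded_flip_wythoffMove.kernel_unique hP isPair_iff_forall_wythoffMove (x, y)
end

section
/- Suppose a set of positions {(a_{k_i}, b_{k_i}) : i ≥ 1} ⊂ ℕ × ℕ satisfies b_{k_{i+1}} = 2(a_{k_{i+1}} − a_{k_i}) + b_{k_i} + 1 for all i, with b_{k_1} = 2a_{k_1} + 1 and a_{k_i} strictly increasing. Fix N ∈ ℕ and suppose #{i : a_{k_i} < N} ≥ m. Then for each x with 1 ≤ x ≤ m, there exists i with a_{k_i} < N such that (N, 2N + x) can reach (a_{k_i}, b_{k_i}) by subtracting (t, 2t) for some t ≥ 1, i.e., N − a_{k_i} = t and 2N + x − b_{k_i} = 2t. -/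
/-!
Writing `b i = 2 * a i + i` (the recurrence telescopes, the `+ 1` contributing the index), the
point `(a x, b x)` lies on the slope-2 line through `(N, 2N + x)`. Since `a` is monotone, the
indices with `a i < N` form an initial segment of `{1, 2, …}`; as there are at least `m ≥ x` of
them, `a x < N`, so `t = N - a x ≥ 1` is the required move.
-/

-- Monotonicity makes the truncated subtraction `a (i + 1) - a i` honest.
theorem eq_two_mul_add_of_rec {a b : ℕ → ℕ} (ha : MonotoneOn a (Set.Ici 1))
    (hb1 : b 1 = 2 * a 1 + 1)
    (hrec : ∀ i, 1 ≤ i → b (i + 1) = 2 * (a (i + 1) - a i) + b i + 1)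
    {i : ℕ} (hi : 1 ≤ i) : b i = 2 * a i + i := by
  induction i, hi using Nat.le_induction with
  | base => exact hb1
  | succ n hn ih =>
    have hle : a n ≤ a (n + 1) := ha (Set.mem_Ici.2 hn) (Set.mem_Ici.2 (by omega)) (by omega)
    rw [hrec n hn, ih]
    omega

theorem lt_of_le_ncard_setOf_lt {α : Type*} [Preorder α] {a : ℕ → α}
    (ha : MonotoneOn a (Set.Ici 1)) {N : α} {x : ℕ} (hx : 1 ≤ x)
    (hxN : x ≤ {i : ℕ | 1 ≤ i ∧ a i < N}.ncard) : a x < N := by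
  by_contra hax
  have hsub : {i : ℕ | 1 ≤ i ∧ a i < N} ⊆ ↑(Finset.Ico 1 x) := by
    rintro i ⟨hi, haiN⟩
    refine Finset.mem_coe.2 (Finset.mem_Ico.2 ⟨hi, ?_⟩)
    by_contra! hxi
    exact hax ((ha (Set.mem_Ici.2 hx) (Set.mem_Ici.2 hi) hxi).trans_lt haiN)
  have hcard := Set.ncard_le_ncard hsub (Finset.Ico 1 x).finite_toSet
  rw [Set.ncard_coe_finset, Nat.card_Ico] at hcard
  omega

theorem sector_reaches_P_general (a b : ℕ → ℕ)
    (ha_mono : ∀ i, 1 ≤ i → a i < a (i + 1))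
    (hb1 : b 1 = 2 * a 1 + 1)
    (hrec : ∀ i, 1 ≤ i → b (i + 1) = 2 * (a (i + 1) - a i) + b i + 1)
    (N m : ℕ)
    (hcount : m ≤ {i : ℕ | 1 ≤ i ∧ a i < N}.ncard) :
    ∀ x : ℕ, 1 ≤ x → x ≤ m →
      ∃ i, 1 ≤ i ∧ a i < N ∧
        ∃ t : ℕ, 1 ≤ t ∧ N = a i + t ∧ 2 * N + x = b i + 2 * t := by
  intro x hx hxm
  have hmono : MonotoneOn a (Set.Ici 1) :=
    (strictMonoOn_of_lt_add_one Set.ordConnected_Ici fun i _ hi _ => ha_mono i hi).monotoneOn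
  have hax : a x < N := lt_of_le_ncard_setOf_lt hmono hx (hxm.trans hcount)
  have hbx : b x = 2 * a x + x := eq_two_mul_add_of_rec hmono hb1 hrec hx
  exact ⟨x, hx, hax, N - a x, by omega, by omega, by omega⟩

theorem sector_reaches_P (a b : ℕ → ℕ)
    (ha_pos : ∀ i, 1 ≤ i → 0 < a i)
    (ha_mono : ∀ i, 1 ≤ i → a i < a (i + 1))
    (hb1 : b 1 = 2 * a 1 + 1)
    (hrec : ∀ i, 1 ≤ i → b (i + 1) = 2 * (a (i + 1) - a i) + b i + 1)
    (N m : ℕ) (hN : 0 < N)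
    (hcount : m ≤ {i : ℕ | 1 ≤ i ∧ a i < N}.ncard) :
    ∀ x : ℕ, 1 ≤ x → x ≤ m →
      ∃ i, 1 ≤ i ∧ a i < N ∧
        ∃ t : ℕ, 1 ≤ t ∧ N = a i + t ∧ 2 * N + x = b i + 2 * t :=
  sector_reaches_P_general a b ha_mono hb1 hrec N m hcount
end
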